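/- arXiv:math/9905158 — 2 statements merged into one kernel-verified Lean document; each statement's English description precedes it below -/
import Mathlib

section
/- For every integer n ≥ 0 and every k ≥ 1, the coefficient a_k in the expansion of t^n + t^{-n} - 2 as a polynomial in w = 2 - t - t^{-1} (i.e. t^n + t^{-n} - 2 = Σ_{k=1}^{n} a_k w^k in the Laurent polynomial ring ℤ[t, t^{-1}]) equals (-1)^k (n/k) · binom(n+k-1, 2k-1). -/
/-!
Since `t · t⁻¹ = 1`, the Dickson polynomial `Dₙ = dickson 1 1 n` (the Chebyshev polynomial `Cₙ`)
satisfies `Dₙ(t + t⁻¹) = tⁿ + t⁻ⁿ`, so `tⁿ + t⁻ⁿ = Dₙ(2 - w)`. The coefficients of `Dₙ(2 - X)`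
obey the three-term recurrence `Dₙ₊₂ = X Dₙ₊₁ - Dₙ`, which the closed form
`(-1)ᵏ (C(n+k, 2k) + C(n+k-1, 2k)) = (-1)ᵏ (n/k) C(n+k-1, 2k-1)` satisfies by Pascal's rule.
The expansion in powers of `w` is unique because `w` is transcendental over `ℤ`: at a real `t > 0`
it evaluates to `2 - t - t⁻¹`, which takes infinitely many values.
-/

open LaurentPolynomial

theorem Nat.choose_add_two_add_choose (m j : ℕ) :
    (m + 2).choose (j + 2) + m.choose (j + 2) = 2 * (m + 1).choose (j + 2) + m.choose j := by
  simp only [Nat.choose_succ_succ]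
  ring

/-- Up to the sign `(-1)ᵏ`, the coefficient of `Xᵏ` in `(dickson 1 1 n).comp (2 - X)`. -/
def dicksonCoeff (n k : ℕ) : ℕ := (n + k).choose (2 * k) + (n + k - 1).choose (2 * k)

theorem dicksonCoeff_zero_right (n : ℕ) : dicksonCoeff n 0 = 2 := by
  simp [dicksonCoeff]

theorem dicksonCoeff_eq_zero_of_lt {n k : ℕ} (h : n < k) : dicksonCoeff n k = 0 := by
  simp [dicksonCoeff, Nat.choose_eq_zero_of_lt (by omega : n + k < 2 * k),
    Nat.choose_eq_zero_of_lt (by omega : n + k - 1 < 2 * k)]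

theorem dicksonCoeff_add_two (n k : ℕ) :
    dicksonCoeff (n + 2) (k + 1) + dicksonCoeff n (k + 1) =
      2 * dicksonCoeff (n + 1) (k + 1) + dicksonCoeff (n + 1) k := by
  have h₁ := Nat.choose_add_two_add_choose (n + k + 1) (2 * k)
  have h₂ := Nat.choose_add_two_add_choose (n + k) (2 * k)
  simp only [dicksonCoeff, show n + 2 + (k + 1) = n + k + 1 + 2 by omega]
  grind

theorem mul_dicksonCoeff {n k : ℕ} (hk : 1 ≤ k) (hkn : k ≤ n) :
    k * dicksonCoeff n k = n * (n + k - 1).choose (2 * k - 1) := by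
  obtain ⟨i, rfl⟩ : ∃ i, k = i + 1 := ⟨k - 1, by omega⟩
  obtain ⟨r, rfl⟩ : ∃ r, n = i + 1 + r := ⟨n - (i + 1), by omega⟩
  have h₁ := Nat.add_one_mul_choose_eq (2 * i + 1 + r) (2 * i + 1)
  have h₂ := Nat.choose_succ_right_eq (2 * i + 1 + r) (2 * i + 1)
  rw [Nat.add_sub_cancel_left] at h₂
  simp only [dicksonCoeff, show i + 1 + r + (i + 1) = 2 * i + 1 + r + 1 by omega,
    show 2 * (i + 1) = 2 * i + 1 + 1 by omega, Nat.add_sub_cancel] at h₁ h₂ ⊢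
  linarith

section

open Polynomial

theorem coeff_dickson_comp_two_sub_X (n k : ℕ) :
    ((dickson 1 (1 : ℤ) n).comp (2 - X)).coeff k = (-1) ^ k * dicksonCoeff n k := by
  induction n using Nat.twoStepInduction generalizing k with
  | zero =>
    rcases k with _ | k
    · simp [dicksonCoeff_zero_right]
    · simp [dicksonCoeff_eq_zero_of_lt, coeff_one]
  | one =>
    rcases k with _ | _ | k
    · simp [dicksonCoeff_zero_right]
    · simp [dicksonCoeff]
    · simp [dicksonCoeff_eq_zero_of_lt, coeff_X]
  | more n ih₀ ih₁ =>
    have hrec : (dickson 1 (1 : ℤ) (n + 2)).comp (2 - X) =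
        2 * (dickson 1 (1 : ℤ) (n + 1)).comp (2 - X) -
          X * (dickson 1 (1 : ℤ) (n + 1)).comp (2 - X) - (dickson 1 (1 : ℤ) n).comp (2 - X) := by
      simp only [dickson_add_two, map_one, one_mul, sub_comp, mul_comp, X_comp]
      ring
    rw [hrec]
    rcases k with _ | k
    · simp [ih₀, ih₁, dicksonCoeff_zero_right]
    · have hk := congrArg (Nat.cast : ℕ → ℤ) (dicksonCoeff_add_two n k)
      push_cast at hk
      simp only [coeff_sub, coeff_X_mul, coeff_ofNat_mul, ih₀, ih₁]
      linear_combination (-1) ^ k * hk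

theorem aeval_dickson_comp_two_sub_X {R A : Type*} [CommRing R] [CommRing A] [Algebra R A]
    {x y : A} (h : x * y = 1) (n : ℕ) :
    aeval (2 - x - y) ((dickson 1 (1 : R) n).comp (2 - X)) = x ^ n + y ^ n := by
  rw [aeval_comp, aeval_def, ← eval_map, map_dickson, map_one]
  convert dickson_one_one_eval_add_inv x y h n using 2
  simp only [map_sub, map_ofNat, aeval_X]
  ring

theorem transcendental_two_sub_T_sub_T_neg_one :
    Transcendental ℤ (2 - T 1 - T (-1) : ℤ[T;T⁻¹]) := by
  rintro ⟨p, hp, hroot⟩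
  have hroots : ∀ t : ℝ, 0 < t → (p.map (Int.castRingHom ℝ)).IsRoot (2 - t - t⁻¹) := by
    intro t ht
    have := congrArg
      (LaurentPolynomial.eval₂ (Int.castRingHom ℝ) (Units.mk0 t ht.ne')).toIntAlgHom hroot
    rw [← aeval_algHom_apply, map_zero] at this
    simpa [eval_map, aeval_def, map_ofNat] using this
  refine hp (map_injective _ (Int.castRingHom ℝ).injective_int ?_)
  rw [Polynomial.map_zero]
  refine eq_zero_of_infinite_isRoot _ (Set.infinite_of_not_bddBelow ?_)
  rw [not_bddBelow_iff]
  intro b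
  refine ⟨2 - (|b| + 2) - (|b| + 2)⁻¹, hroots _ (by positivity), ?_⟩
  have : 0 < (|b| + 2)⁻¹ := by positivity
  linarith [neg_abs_le b]

end

/-- Expansion of `t^n + t^{-n} - 2` in powers of `w = 2 - t - t⁻¹`:
the coefficient `a k` satisfies `a k = (-1)^k (n/k) C(n+k-1, 2k-1)`
(stated multiplied through by `k`). -/
theorem stmt0 (n : ℕ) (a : ℕ → ℤ)
    (h : (T (n : ℤ) + T (-(n : ℤ)) - 2 : LaurentPolynomial ℤ) =
      ∑ k ∈ Finset.Icc 1 n, C (a k) * (2 - T 1 - T (-1)) ^ k) :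
    ∀ k ∈ Finset.Icc 1 n,
      (k : ℤ) * a k = (-1) ^ k * (n : ℤ) * (Nat.choose (n + k - 1) (2 * k - 1) : ℤ) := by
  have hpoly : ∑ k ∈ Finset.Icc 1 n, Polynomial.C (a k) * Polynomial.X ^ k =
      (Polynomial.dickson 1 (1 : ℤ) n).comp (2 - Polynomial.X) - Polynomial.C 2 := by
    apply transcendental_iff_injective.mp transcendental_two_sub_T_sub_T_neg_one
    have hT : (T 1 * T (-1) : ℤ[T;T⁻¹]) = 1 := by rw [← T_add]; rfl
    simp only [map_sum, map_sub, map_mul, map_pow, Polynomial.aeval_C, Polynomial.aeval_X,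
      ← C_eq_algebraMap, map_ofNat, aeval_dickson_comp_two_sub_X hT, T_pow, mul_one, mul_neg, h]
  intro k hk
  rw [Finset.mem_Icc] at hk
  have hak : a k = (-1) ^ k * dicksonCoeff n k := by
    have := congrArg (Polynomial.coeff · k) hpoly
    simpa only [Polynomial.finsetSum_coeff, Polynomial.coeff_C_mul_X_pow, Polynomial.coeff_sub,
      Polynomial.coeff_C, coeff_dickson_comp_two_sub_X, Finset.sum_ite_eq, Finset.mem_Icc,
      if_pos hk, if_neg (show k ≠ 0 by omega), sub_zero] using this
  have hmul := congrArg (Nat.cast : ℕ → ℤ) (mul_dicksonCoeff hk.1 hk.2)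
  push_cast at hmul
  rw [hak]
  linear_combination (-1) ^ k * hmul
end

section
/- Let G be a free abelian monoid (prime decompositions) with an involution * and an action ε (with ε² = id) on the set of primes, both extended multiplicatively. Suppose an element K satisfies K* = εK. Then K is a product of primes P with P* = εP and of pairs P·Q with P* = εQ (ε-squares). -/
/-- Unique factorization in a free commutative monoid (multisets of primes)
with a multiplicative involution `σ`: if `σ K = K` then `K` is a product of
`σ`-fixed primes and of pairs `P · σ P`. -/
theorem stmt3 {α : Type*} (σ : α → α) (hσ : Function.Involutive σ)
    (K : Multiset α) (hK : Multiset.map σ K = K) :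
    ∃ A B : Multiset α, K = A + B + Multiset.map σ B ∧ ∀ p ∈ A, σ p = p := by
  classical
  induction K using Multiset.strongInductionOn with
  | ih K ih =>
    rcases Multiset.empty_or_exists_mem K with h0 | ⟨p, hp⟩
    · exact ⟨0, 0, by simp [h0], by simp⟩
    by_cases hfix : σ p = p
    · have hsub : K.erase p < K := Multiset.erase_lt.mpr hp
      have hmap : (K.erase p).map σ = K.erase p := by
        rw [Multiset.map_erase _ hσ.injective, hfix, hK]
      obtain ⟨A, B, hAB, hA⟩ := ih _ hsub hmap
      refine ⟨p ::ₘ A, B, ?_, ?_⟩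
      · rw [Multiset.cons_add, Multiset.cons_add, ← hAB, Multiset.cons_erase hp]
      · intro q hq
        rcases Multiset.mem_cons.mp hq with rfl | hq
        · exact hfix
        · exact hA q hq
    · have hσp : σ p ∈ K := by
        rw [← hK]; exact Multiset.mem_map_of_mem σ hp
      have hσp' : σ p ∈ K.erase p := Multiset.mem_erase_of_ne hfix |>.mpr hσp
      set K' := (K.erase p).erase (σ p) with hK'
      have hsub : K' < K :=
        lt_of_le_of_lt (Multiset.erase_le _ _) (Multiset.erase_lt.mpr hp)
      have hmap : K'.map σ = K' := by
        rw [hK', Multiset.map_erase _ hσ.injective, Multiset.map_erase _ hσ.injective,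
          hK, hσ p, Multiset.erase_comm]
      obtain ⟨A, B, hAB, hA⟩ := ih _ hsub hmap
      refine ⟨A, p ::ₘ B, ?_, hA⟩
      have hKeq : K = p ::ₘ σ p ::ₘ K' := by
        rw [hK', Multiset.cons_erase hσp', Multiset.cons_erase hp]
      rw [hKeq, hAB, Multiset.map_cons]
      simp [Multiset.add_cons, Multiset.cons_add, Multiset.cons_swap]
end
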